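/- The diagonal entries of X_n = B_n^{-1} A_n satisfy X_n(i,i) = 2i - 1 + α + κ for i = 2,…,n, and X_n(1,1) = (α+1)(κ+1). -/

import Mathlib

/-- a_i = -(i+α+1)(i+κ+1) -/
def acoef (α κ : ℝ) (i : ℕ) : ℝ := -(((i : ℝ) + α + 1) * ((i : ℝ) + κ + 1))

/-- b_i = i(2i+α+κ+1)+(i+α+1)(i+κ+1) -/
def bcoef (α κ : ℝ) (i : ℕ) : ℝ :=
  (i : ℝ) * (2 * (i : ℝ) + α + κ + 1) + ((i : ℝ) + α + 1) * ((i : ℝ) + κ + 1)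

/-- c_i = -i(3i+α+κ) -/
def ccoef (α κ : ℝ) (i : ℕ) : ℝ := -((i : ℝ) * (3 * (i : ℝ) + α + κ))

/-- d_i = (i-1)i -/
def dcoef (i : ℕ) : ℝ := ((i : ℝ) - 1) * (i : ℝ)

/-- The banded matrix `A_n` of the four-term recurrence: with 1-based
indices, `A_n(i,i) = b_{i-1}`, `A_n(i,i+1) = a_{i-1}`, `A_n(i+1,i) = c_i`,
`A_n(i+2,i) = d_{i+1}`.  Here `i : Fin n` is the 0-based index, so the
coefficient index coincides with the 0-based row index. -/
def Amat (α κ : ℝ) (n : ℕ) : Matrix (Fin n) (Fin n) ℝ := fun i j =>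
  if (i : ℕ) = (j : ℕ) then bcoef α κ i
  else if (j : ℕ) = (i : ℕ) + 1 then acoef α κ i
  else if (i : ℕ) = (j : ℕ) + 1 then ccoef α κ i
  else if (i : ℕ) = (j : ℕ) + 2 then dcoef i
  else 0

/-- The lower bidiagonal matrix `B_n` with diagonal entries
`e_{i-1} = i` (1-based) and subdiagonal entries `f_i = -i`. -/
def Bmat (n : ℕ) : Matrix (Fin n) (Fin n) ℝ := fun i j =>
  if (i : ℕ) = (j : ℕ) then ((i : ℕ) : ℝ) + 1
  else if (i : ℕ) = (j : ℕ) + 1 then -((i : ℕ) : ℝ)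
  else 0

/-- `X_n = B_n⁻¹ A_n`. -/
noncomputable def Xmat (α κ : ℝ) (n : ℕ) : Matrix (Fin n) (Fin n) ℝ :=
  (Bmat n)⁻¹ * Amat α κ n

/-!
`B_n` has rows `(i+1) e_i - i e_{i-1}`, so `B_n⁻¹` is the lower triangular matrix whose `i`-th row
is `1/(i+1)` on and below the diagonal. As column `j` of `A_n` has no nonzero entry above row
`j-1`, only two terms of `(B_n⁻¹ A_n)(j,j)` survive: `X_n(j,j) = (a_{j-1} + b_j)/(j+1)`, and
`a_{j-1} + b_j = (j+1)(2j+1+α+κ)`. For `j = 0` only `b_0 = (α+1)(κ+1)` remains.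
-/

open Matrix

section Bmat

variable {n : ℕ} {o : Type*}

lemma Bmat_mul_apply_of_val_eq_zero (M : Matrix (Fin n) o ℝ) {i : Fin n} (hi : (i : ℕ) = 0)
    (j : o) : (Bmat n * M) i j = M i j := by
  rw [mul_apply, Fintype.sum_eq_single i]
  · simp [Bmat, hi]
  · intro k hk
    have hik : (i : ℕ) ≠ k := fun h => hk (Fin.ext h.symm)
    have hik' : (i : ℕ) ≠ k + 1 := by omega
    simp [Bmat, hik, hik']

lemma Bmat_mul_apply_of_val_eq_succ (M : Matrix (Fin n) o ℝ) {i k : Fin n}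
    (hik : (i : ℕ) = k + 1) (j : o) :
    (Bmat n * M) i j = ((i : ℕ) + 1 : ℝ) * M i j - ((i : ℕ) : ℝ) * M k j := by
  have hki : k ≠ i := fun h => by simp [h] at hik
  rw [mul_apply, Fintype.sum_eq_add k i hki]
  · simp only [Bmat, hik, Nat.add_eq_left, one_ne_zero, ↓reduceIte,
      Nat.cast_add, Nat.cast_one, neg_add_rev]
    ring
  · rintro l ⟨hlk, hli⟩
    have h₁ : (i : ℕ) ≠ l := fun h => hli (Fin.ext h.symm)
    have h₂ : (i : ℕ) ≠ l + 1 := fun h => hlk (Fin.ext (by omega))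
    simp [Bmat, h₁, h₂]

variable (n) in
noncomputable def BmatInv : Matrix (Fin n) (Fin n) ℝ :=
  of fun i j => if j ≤ i then (((i : ℕ) : ℝ) + 1)⁻¹ else 0

lemma BmatInv_apply_of_lt {i j : Fin n} (h : i < j) : BmatInv n i j = 0 := by
  simp [BmatInv, not_le.mpr h]

lemma succ_mul_BmatInv_apply (i j : Fin n) :
    (((i : ℕ) : ℝ) + 1) * BmatInv n i j = if j ≤ i then 1 else 0 := by
  by_cases h : j ≤ i
  · simp only [BmatInv, of_apply, if_pos h]
    exact mul_inv_cancel₀ (by positivity)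
  · simp [BmatInv, h]

variable (n) in
lemma Bmat_mul_BmatInv : Bmat n * BmatInv n = 1 := by
  ext i j
  rw [one_apply]
  rcases Nat.eq_zero_or_pos (i : ℕ) with hi | hi
  · rw [Bmat_mul_apply_of_val_eq_zero _ hi]
    simp only [BmatInv, of_apply, Fin.le_iff_val_le_val, Fin.ext_iff, hi]
    split_ifs <;> first | omega | norm_num
  · obtain ⟨k, hik⟩ : ∃ k : Fin n, (i : ℕ) = k + 1 := ⟨⟨i - 1, by omega⟩, by simp; omega⟩
    have hk : ((i : ℕ) : ℝ) = ((k : ℕ) : ℝ) + 1 := by rw [hik]; push_cast; ring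
    rw [Bmat_mul_apply_of_val_eq_succ _ hik, succ_mul_BmatInv_apply, hk,
      succ_mul_BmatInv_apply]
    simp only [Fin.le_iff_val_le_val, Fin.ext_iff]
    split_ifs <;> first | omega | norm_num

variable (n) in
lemma Bmat_inv : (Bmat n)⁻¹ = BmatInv n := inv_eq_right_inv (Bmat_mul_BmatInv n)

end Bmat

section Xmat

variable {α κ : ℝ} {n : ℕ}

lemma Amat_apply_of_succ_lt {k j : Fin n} (h : (k : ℕ) + 1 < j) : Amat α κ n k j = 0 := by
  have h₁ : (k : ℕ) ≠ j := by omega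
  have h₂ : (j : ℕ) ≠ k + 1 := by omega
  have h₃ : (k : ℕ) ≠ j + 1 := by omega
  have h₄ : (k : ℕ) ≠ j + 2 := by omega
  simp [Amat, h₁, h₂, h₃, h₄]

lemma Xmat_apply_of_val_eq_zero {j : Fin n} (hj : (j : ℕ) = 0) :
    Xmat α κ n j j = bcoef α κ 0 := by
  rw [Xmat, Bmat_inv, mul_apply, Fintype.sum_eq_single j]
  · simp [BmatInv, Amat, hj]
  · intro k hk
    have hjk : j < k := Fin.lt_def.mpr (by have := Fin.val_ne_of_ne hk; omega)
    rw [BmatInv_apply_of_lt hjk, zero_mul]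

lemma Xmat_apply_of_val_eq_succ {j k : Fin n} (hjk : (j : ℕ) = k + 1) :
    Xmat α κ n j j = (((j : ℕ) : ℝ) + 1)⁻¹ * (acoef α κ k + bcoef α κ j) := by
  have hkj : k ≠ j := fun h => by simp [h] at hjk
  rw [Xmat, Bmat_inv, mul_apply, Fintype.sum_eq_add k j hkj]
  · have hkle : k ≤ j := Fin.le_def.mpr (by omega)
    simp only [BmatInv, of_apply, hkle, ↓reduceIte, hjk, Nat.cast_add, Nat.cast_one, Amat,
      Nat.left_eq_add, one_ne_zero, le_refl]
    ring
  · rintro l ⟨hlk, hlj⟩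
    rcases lt_or_gt_of_ne (Fin.val_ne_of_ne hlj) with hl | hl
    · have hl' : (l : ℕ) + 1 < j := by have := Fin.val_ne_of_ne hlk; omega
      rw [Amat_apply_of_succ_lt hl', mul_zero]
    · rw [BmatInv_apply_of_lt hl, zero_mul]

lemma acoef_add_bcoef_succ (k : ℕ) :
    acoef α κ k + bcoef α κ (k + 1) = ((k : ℝ) + 2) * (2 * k + 3 + α + κ) := by
  simp only [acoef, bcoef]
  push_cast
  ring

lemma Xmat_apply_diag_of_val_eq_succ {j k : Fin n} (hjk : (j : ℕ) = k + 1) :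
    Xmat α κ n j j = 2 * ((j : ℕ) : ℝ) + 1 + α + κ := by
  have hj : ((j : ℕ) : ℝ) + 1 = (k : ℕ) + 2 := by rw [hjk]; push_cast; ring
  rw [Xmat_apply_of_val_eq_succ hjk, hjk, acoef_add_bcoef_succ, ← hjk, hj,
    inv_mul_cancel_left₀ (by positivity), hjk]
  push_cast
  ring

end Xmat

/-- Diagonal entries (1-based): `X_n(i,i) = 2i-1+α+κ` for `i = 2,…,n`,
and `X_n(1,1) = (α+1)(κ+1)`. -/
theorem Xmat_diagonal (α κ : ℝ) (n : ℕ) (hn : 1 ≤ n) :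
    (∀ i : ℕ, ∀ _h2 : 2 ≤ i, ∀ _hi : i ≤ n,
      Xmat α κ n ⟨i - 1, by omega⟩ ⟨i - 1, by omega⟩ = 2 * (i : ℝ) - 1 + α + κ) ∧
    Xmat α κ n ⟨0, by omega⟩ ⟨0, by omega⟩ = (α + 1) * (κ + 1) := by
  refine ⟨fun i h2 hi => ?_, ?_⟩
  · have hi₁ : ((i - 1 : ℕ) : ℝ) = i - 1 := by rw [Nat.cast_sub (by omega)]; simp
    rw [Xmat_apply_diag_of_val_eq_succ (k := ⟨i - 2, by omega⟩) (by simp; omega), hi₁]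
    ring
  · rw [Xmat_apply_of_val_eq_zero rfl, bcoef]
    simp
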